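/- In a simply-laced Weyl group, an element w is small-height-avoiding if and only if it is short-braid-avoiding, i.e., no reduced expression for w contains a factor s_i s_j s_i with s_i ≠ s_j. -/

import Mathlib

open Finset

noncomputable section

namespace QBG

variable {ι V V' : Type*} [Fintype ι] [AddCommGroup V] [Module ℝ V]
  [AddCommGroup V'] [Module ℝ V']

variable (P : RootPairing ι ℝ V V') [P.IsRootSystem] (f : V →ₗ[ℝ] ℝ)

/-- `k` indexes a positive root (w.r.t. the regular linear functional `f`). -/
def Pos (k : ι) : Prop := 0 < f (P.root k)

/-- `k` indexes a simple root: positive and not a sum of two positive roots. -/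
def IsSimple (k : ι) : Prop := Pos P f k ∧
  ¬ ∃ i j : ι, Pos P f i ∧ Pos P f j ∧ P.root k = P.root i + P.root j

/-- The reflection `s_α` associated to the root indexed by `k`. -/
def refl (k : ι) : V ≃ₗ[ℝ] V := P.reflection k

/-- `l` is a word in simple reflections with product `w`. -/
def Wrd (w : V ≃ₗ[ℝ] V) (l : List ι) : Prop :=
  (∀ i ∈ l, IsSimple P f i) ∧ (l.map (refl P)).prod = w

/-- `w` lies in the Weyl group (generated by simple reflections). -/
def InW (w : V ≃ₗ[ℝ] V) : Prop := ∃ l, Wrd P f w l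

/-- Coxeter length of `w` with respect to the simple reflections. -/
def len (w : V ≃ₗ[ℝ] V) : ℕ := sInf {n | ∃ l, Wrd P f w l ∧ l.length = n}

/-- The pairing `⟨2ρ, α_k^∨⟩` where `ρ` is the half-sum of positive roots. -/
def tworho (k : ι) : ℝ := ∑ i, if 0 < f (P.root i) then P.pairing i k else 0

/-- An upward edge of the quantum Bruhat graph, from `w`, labeled `k`. -/
def UpStep (w : V ≃ₗ[ℝ] V) (k : ι) : Prop :=
  Pos P f k ∧ len P f (w * refl P k) = len P f w + 1

/-- A downward edge of the quantum Bruhat graph, from `w`, labeled `k`. -/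
def DownStep (w : V ≃ₗ[ℝ] V) (k : ι) : Prop :=
  Pos P f k ∧ (len P f (w * refl P k) : ℝ) = (len P f w : ℝ) - tworho P f k + 1

/-- An edge of the quantum Bruhat graph, from `w`, labeled `k`. -/
def Step (w : V ≃ₗ[ℝ] V) (k : ι) : Prop := UpStep P f w k ∨ DownStep P f w k

/-- `ks` is the list of labels of a directed path in the quantum Bruhat graph
starting at `w`. -/
def ValidPath : (V ≃ₗ[ℝ] V) → List ι → Prop
  | _, [] => True
  | w, k :: ks => Step P f w k ∧ ValidPath (w * refl P k) ks

/-- `ks` is the list of labels of an all-downward path starting at `w`. -/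
def DownPath : (V ≃ₗ[ℝ] V) → List ι → Prop
  | _, [] => True
  | w, k :: ks => DownStep P f w k ∧ DownPath (w * refl P k) ks

/-- `ks` is the list of labels of an all-upward path starting at `w`. -/
def UpPath : (V ≃ₗ[ℝ] V) → List ι → Prop
  | _, [] => True
  | w, k :: ks => UpStep P f w k ∧ UpPath (w * refl P k) ks

/-- The endpoint of the path starting at `w` with edge labels `ks`. -/
def pathEnd (w : V ≃ₗ[ℝ] V) (ks : List ι) : V ≃ₗ[ℝ] V := w * (ks.map (refl P)).prod

/-- The distance `d_Γ(u,v)` in the quantum Bruhat graph. -/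
def dist (u v : V ≃ₗ[ℝ] V) : ℕ :=
  sInf {n | ∃ ks, ValidPath P f u ks ∧ pathEnd P u ks = v ∧ ks.length = n}

/-- The all-downward distance `d_↓(w)` from `w` to the identity. -/
def ddown (w : V ≃ₗ[ℝ] V) : ℕ :=
  sInf {n | ∃ ks, DownPath P f w ks ∧ pathEnd P w ks = 1 ∧ ks.length = n}

open Classical in
/-- The pairing of `2ρ` with the weight of the path `(w, ks)`, i.e. the sum of
`⟨2ρ, α^∨⟩` over the downward edges of the path. -/
def downWeight : (V ≃ₗ[ℝ] V) → List ι → ℝ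
  | _, [] => 0
  | w, k :: ks =>
      (if UpStep P f w k then 0 else tworho P f k) + downWeight (w * refl P k) ks

/-- `w` contains `v`: `w = u * v * u'` length-additively. -/
def Contains (w v : V ≃ₗ[ℝ] V) : Prop :=
  ∃ u u', InW P f u ∧ InW P f u' ∧ w = u * v * u' ∧
    len P f w = len P f u + len P f v + len P f u'

/-- `w` is small-height-avoiding: it contains no non-simple reflection `s_β`
with `ℓ(s_β) = ⟨2ρ, β^∨⟩ - 1`. -/
def SmallHeightAvoiding (w : V ≃ₗ[ℝ] V) : Prop :=
  ¬ ∃ k : ι, Pos P f k ∧ ¬ IsSimple P f k ∧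
      (len P f (refl P k) : ℝ) = tworho P f k - 1 ∧ Contains P f w (refl P k)

/-- The root system `P` is reduced. -/
def Reduced : Prop := ∀ i j : ι, P.root i ≠ (2 : ℝ) • P.root j

/-- The linear functional `f` is regular: it vanishes on no root. -/
def Regular : Prop := ∀ i : ι, f (P.root i) ≠ 0

/-!
In a simply-laced crystallographic root system the pairing of two distinct simple roots is `0` or
`-1`. A factor `s_i s_j s_i` (with `s_i ≠ s_j`) of a reduced word therefore has
`⟨α_i, α_j^∨⟩ = -1`: for `0` the reflections commute and the word shortens. It is then the
reflection in the non-simple root `α_i + α_j`, of length `3 = ⟨2ρ, (α_i + α_j)^∨⟩ - 1`.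

Conversely, for a non-simple positive root `β` there is a simple `α_i` with `⟨α_i, β^∨⟩ = 1`, and
`s_β = s_i s_{β - α_i} s_i` with lengths adding up. Descending on the height of `β`, `s_β`
contains some `s_i s_j s_i` with `⟨α_i, α_j^∨⟩ = -1`; containment is transitive, so every `w`
containing `s_β` has a reduced word with the factor `i j i`.
-/

def SimplyLaced : Prop := ∀ i j : ι, P.pairing i j = P.pairing j i

section

variable {P f}
omit [P.IsRootSystem]

section

omit [Fintype ι]

lemma refl_mul_refl (k : ι) : refl P k * refl P k = 1 := by
  ext x
  exact P.reflection_same k x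

lemma refl_reflectionPerm (i j : ι) :
    refl P (P.reflectionPerm i j) = refl P i * refl P j * refl P i :=
  P.reflection_reflectionPerm

lemma pairing_reflectionPerm_right (i j m : ι) :
    P.pairing m (P.reflectionPerm i j) = P.pairing m j - P.pairing i j * P.pairing m i := by
  rw [RootPairing.pairing_reflectionPerm, ← RootPairing.root_coroot'_eq_pairing,
    RootPairing.root_reflectionPerm, RootPairing.reflection_apply_root, map_sub, map_smul,
    RootPairing.root_coroot'_eq_pairing, RootPairing.root_coroot'_eq_pairing, smul_eq_mul]
  ring

lemma exists_root_eq_prod_apply (l : List ι) (i : ι) :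
    ∃ m, (l.map (refl P)).prod (P.root i) = P.root m ∧
      refl P m = (l.map (refl P)).prod * refl P i * ((l.map (refl P)).prod)⁻¹ := by
  induction l with
  | nil => exact ⟨i, by simp⟩
  | cons a t ih =>
    obtain ⟨m, hroot, hrefl⟩ := ih
    refine ⟨P.reflectionPerm a m, ?_, ?_⟩
    · simp [hroot, refl, RootPairing.root_reflectionPerm]
    · simp only [refl, RootPairing.reflection_reflectionPerm] at hrefl ⊢
      simp only [hrefl, List.map_cons, List.prod_cons, mul_inv_rev, mul_assoc]
      rfl

lemma pos_reflectionPerm_self_of_neg {n : ι} (hn : f (P.root n) < 0) :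
    Pos P f (P.reflectionPerm n n) := by
  simpa [Pos, RootPairing.root_reflectionPerm] using hn

lemma pos_of_root_eq_sub_isSimple (hreg : Regular P f) {i m n : ι} (hi : IsSimple P f i)
    (hm : Pos P f m) (hn : P.root n = P.root m - P.root i) : Pos P f n := by
  refine (hreg n).lt_or_gt.resolve_left fun hneg => hi.2 ?_
  refine ⟨m, P.reflectionPerm n n, hm, pos_reflectionPerm_self_of_neg hneg, ?_⟩
  rw [RootPairing.root_reflectionPerm, RootPairing.reflection_apply_self, hn]
  abel

lemma Wrd.append {w₁ w₂ : V ≃ₗ[ℝ] V} {l₁ l₂ : List ι} (h₁ : Wrd P f w₁ l₁)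
    (h₂ : Wrd P f w₂ l₂) : Wrd P f (w₁ * w₂) (l₁ ++ l₂) := by
  refine ⟨fun a ha => (List.mem_append.mp ha).elim (h₁.1 a) (h₂.1 a), ?_⟩
  rw [List.map_append, List.prod_append, h₁.2, h₂.2]

lemma prod_reverse_mul_prod (l : List ι) :
    (l.reverse.map (refl P)).prod * (l.map (refl P)).prod = 1 := by
  induction l with
  | nil => simp
  | cons a t ih =>
    calc ((a :: t).reverse.map (refl P)).prod * ((a :: t).map (refl P)).prod
        = (t.reverse.map (refl P)).prod * (refl P a * refl P a) * (t.map (refl P)).prod := by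
          simp [mul_assoc]
      _ = 1 := by rw [refl_mul_refl, mul_one, ih]

lemma Wrd.reverse {w : V ≃ₗ[ℝ] V} {l : List ι} (h : Wrd P f w l) : Wrd P f w⁻¹ l.reverse :=
  ⟨fun a ha => h.1 a (List.mem_reverse.mp ha),
    eq_inv_of_mul_eq_one_left (h.2 ▸ prod_reverse_mul_prod l)⟩

lemma wrd_refl {i : ι} (hi : IsSimple P f i) : Wrd P f (refl P i) [i] :=
  ⟨by simpa using hi, by simp⟩

lemma wrd_braid {i j : ι} (hi : IsSimple P f i) (hj : IsSimple P f j) :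
    Wrd P f (refl P i * refl P j * refl P i) [i, j, i] := by
  simpa [mul_assoc] using ((wrd_refl hi).append (wrd_refl hj)).append (wrd_refl hi)

lemma len_le_length {w : V ≃ₗ[ℝ] V} {l : List ι} (h : Wrd P f w l) : len P f w ≤ l.length :=
  Nat.sInf_le ⟨l, h, rfl⟩

lemma InW.exists_reduced {w : V ≃ₗ[ℝ] V} (h : InW P f w) :
    ∃ l, Wrd P f w l ∧ l.length = len P f w :=
  Nat.sInf_mem (s := {n | ∃ l, Wrd P f w l ∧ l.length = n}) (h.elim fun l hl => ⟨_, l, hl, rfl⟩)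

lemma inW_one : InW P f (1 : V ≃ₗ[ℝ] V) := ⟨[], by simp, by simp⟩

lemma len_one : len P f (1 : V ≃ₗ[ℝ] V) = 0 :=
  Nat.le_zero.mp (len_le_length (⟨by simp, by simp⟩ : Wrd P f 1 []))

lemma InW.mul {w₁ w₂ : V ≃ₗ[ℝ] V} (h₁ : InW P f w₁) (h₂ : InW P f w₂) :
    InW P f (w₁ * w₂) :=
  h₁.elim fun _ hl₁ => h₂.elim fun _ hl₂ => ⟨_, hl₁.append hl₂⟩

lemma InW.inv {w : V ≃ₗ[ℝ] V} (h : InW P f w) : InW P f w⁻¹ :=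
  h.elim fun _ hl => ⟨_, hl.reverse⟩

lemma len_mul_le {w₁ w₂ : V ≃ₗ[ℝ] V} (h₁ : InW P f w₁) (h₂ : InW P f w₂) :
    len P f (w₁ * w₂) ≤ len P f w₁ + len P f w₂ := by
  obtain ⟨l₁, hl₁, hlen₁⟩ := h₁.exists_reduced
  obtain ⟨l₂, hl₂, hlen₂⟩ := h₂.exists_reduced
  simpa [hlen₁, hlen₂] using len_le_length (hl₁.append hl₂)

lemma len_mul_mul_le {u v u' : V ≃ₗ[ℝ] V} (hu : InW P f u) (hv : InW P f v) (hu' : InW P f u') :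
    len P f (u * v * u') ≤ len P f u + len P f v + len P f u' :=
  (len_mul_le (hu.mul hv) hu').trans (by gcongr; exact len_mul_le hu hv)

lemma len_inv {w : V ≃ₗ[ℝ] V} (h : InW P f w) : len P f w⁻¹ = len P f w := by
  have key : ∀ {v : V ≃ₗ[ℝ] V}, InW P f v → len P f v⁻¹ ≤ len P f v := fun hv => by
    obtain ⟨l, hl, hlen⟩ := hv.exists_reduced
    simpa [hlen] using len_le_length hl.reverse
  exact le_antisymm (key h) (by simpa using key h.inv)

lemma len_mul_refl_le {w : V ≃ₗ[ℝ] V} (hw : InW P f w) {i : ι} (hi : IsSimple P f i) :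
    len P f (w * refl P i) ≤ len P f w + 1 :=
  (len_mul_le hw ⟨_, wrd_refl hi⟩).trans (by simpa using len_le_length (wrd_refl hi))

lemma refl_ne_refl_of_len_braid {i j : ι} (hi : IsSimple P f i)
    (h : len P f (refl P i * refl P j * refl P i) = 3) : refl P i ≠ refl P j := by
  intro hij
  have := len_le_length (wrd_refl hi)
  rw [hij, refl_mul_refl, one_mul] at h
  rw [hij, h] at this
  simp at this

lemma Contains.refl {w : V ≃ₗ[ℝ] V} : Contains P f w w :=
  ⟨1, 1, inW_one, inW_one, by simp, by simp [len_one]⟩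

lemma Contains.trans {w v t : V ≃ₗ[ℝ] V} (h₁ : Contains P f w v) (h₂ : Contains P f v t)
    (ht : InW P f t) : Contains P f w t := by
  obtain ⟨u, u', hu, hu', rfl, hw⟩ := h₁
  obtain ⟨a, a', ha, ha', rfl, hv⟩ := h₂
  refine ⟨u * a, a' * u', hu.mul ha, ha'.mul hu', by group, ?_⟩
  have hsub := len_mul_mul_le (hu.mul ha) ht (ha'.mul hu')
  rw [show u * a * t * (a' * u') = u * (a * t * a') * u' by group] at hsub
  have := len_mul_le hu ha
  have := len_mul_le ha' hu'
  omega

lemma contains_of_reduced_infix {w : V ≃ₗ[ℝ] V} {l₁ m l₂ : List ι}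
    (hl : Wrd P f w (l₁ ++ m ++ l₂)) (hlen : (l₁ ++ m ++ l₂).length = len P f w) :
    Contains P f w (m.map (refl P)).prod ∧ len P f (m.map (refl P)).prod = m.length := by
  have h₁ : Wrd P f _ l₁ := ⟨fun a ha => hl.1 a (by simp [ha]), rfl⟩
  have hm : Wrd P f _ m := ⟨fun a ha => hl.1 a (by simp [ha]), rfl⟩
  have h₂ : Wrd P f _ l₂ := ⟨fun a ha => hl.1 a (by simp [ha]), rfl⟩
  have hw : w = (l₁.map (refl P)).prod * (m.map (refl P)).prod * (l₂.map (refl P)).prod := by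
    simp [← hl.2, mul_assoc]
  have hsub := len_mul_mul_le ⟨_, h₁⟩ ⟨_, hm⟩ ⟨_, h₂⟩
  rw [← hw] at hsub
  have := len_le_length h₁
  have := len_le_length hm
  have := len_le_length h₂
  simp only [List.length_append] at hlen
  refine ⟨⟨_, _, ⟨_, h₁⟩, ⟨_, h₂⟩, hw, ?_⟩, ?_⟩ <;> omega

lemma Contains.exists_reduced_infix {w v : V ≃ₗ[ℝ] V} {m : List ι} (h : Contains P f w v)
    (hm : Wrd P f v m) (hmlen : m.length = len P f v) :
    ∃ l₁ l₂, Wrd P f w (l₁ ++ m ++ l₂) ∧ (l₁ ++ m ++ l₂).length = len P f w := by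
  obtain ⟨u, u', hu, hu', rfl, hlen⟩ := h
  obtain ⟨l₁, h₁, hlen₁⟩ := hu.exists_reduced
  obtain ⟨l₂, h₂, hlen₂⟩ := hu'.exists_reduced
  exact ⟨l₁, l₂, (h₁.append hm).append h₂, by simp [hlen, hlen₁, hlen₂, hmlen, add_assoc]⟩

end

lemma pairing_eq_of_simplyLaced [P.IsCrystallographic] (hSL : SimplyLaced P)
    (i j : ι) : P.pairing i j = -2 ∨ P.pairing i j = -1 ∨ P.pairing i j = 0 ∨
      P.pairing i j = 1 ∨ P.pairing i j = 2 := by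
  have hmem := P.pairingIn_pairingIn_mem_set_of_isCrystallographic i j
  have hsymm : P.pairingIn ℤ j i = P.pairingIn ℤ i j := by
    apply (algebraMap ℤ ℝ).injective_int
    simp only [RootPairing.algebraMap_pairingIn, hSL i j]
  have hint : P.pairingIn ℤ i j = -2 ∨ P.pairingIn ℤ i j = -1 ∨ P.pairingIn ℤ i j = 0 ∨
      P.pairingIn ℤ i j = 1 ∨ P.pairingIn ℤ i j = 2 := by
    simp only [hsymm, Set.mem_insert_iff, Set.mem_singleton_iff, Prod.mk.injEq] at hmem
    omega
  rw [← P.algebraMap_pairingIn ℤ]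
  rcases hint with h | h | h | h | h <;> simp [h]

lemma pairing_eq_one_or_two_of_pos [P.IsCrystallographic]
    (hSL : SimplyLaced P) {i j : ι} (h : 0 < P.pairing i j) :
    P.pairing i j = 1 ∨ P.pairing i j = 2 := by
  rcases pairing_eq_of_simplyLaced hSL i j with h' | h' | h' | h' | h' <;>
    norm_num [h'] at h <;> simp [h']

lemma eq_of_pairing_eq_two (hSL : SimplyLaced P) {i j : ι}
    (h : P.pairing i j = 2) : i = j :=
  (P.pairing_two_two_iff i j).mp ⟨h, (hSL j i).trans h⟩

lemma pairing_nonpos_of_isSimple [P.IsCrystallographic] (hreg : Regular P f)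
    (hSL : SimplyLaced P) {i j : ι} (hi : IsSimple P f i)
    (hj : IsSimple P f j) (hij : i ≠ j) : P.pairing i j ≤ 0 := by
  by_contra! hpos
  rcases pairing_eq_one_or_two_of_pos hSL hpos with h | h
  · have hroot : P.root (P.reflectionPerm j i) = P.root i - P.root j := by
      rw [RootPairing.root_reflectionPerm, RootPairing.reflection_apply_root, h, one_smul]
    exact hi.2 ⟨_, j, pos_of_root_eq_sub_isSimple hreg hj hi.1 hroot, hj.1, by rw [hroot]; abel⟩
  · exact hij (eq_of_pairing_eq_two hSL h)

lemma pos_reflectionPerm [P.IsCrystallographic] (hreg : Regular P f)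
    (hSL : SimplyLaced P) {i m : ι} (hi : IsSimple P f i)
    (hm : Pos P f m) (hmi : m ≠ i) : Pos P f (P.reflectionPerm i m) := by
  have hroot : P.root (P.reflectionPerm i m) = P.root m - P.pairing m i • P.root i := by
    rw [RootPairing.root_reflectionPerm, RootPairing.reflection_apply_root]
  by_cases hp : P.pairing m i ≤ 0
  · have : 0 < f (P.root m) := hm
    have : 0 < f (P.root i) := hi.1
    show 0 < f _
    rw [hroot, map_sub, map_smul, smul_eq_mul]
    nlinarith
  · rcases pairing_eq_one_or_two_of_pos hSL (not_le.mp hp) with h | h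
    · exact pos_of_root_eq_sub_isSimple hreg hi hm (by rw [hroot, h, one_smul])
    · exact absurd (eq_of_pairing_eq_two hSL h) hmi

lemma pos_reflectionPerm_iff [P.IsCrystallographic] (hreg : Regular P f)
    (hSL : SimplyLaced P) {i m : ι} (hi : IsSimple P f i)
    (hmi : m ≠ i) (hmi' : m ≠ P.reflectionPerm i i) :
    Pos P f (P.reflectionPerm i m) ↔ Pos P f m := by
  refine ⟨fun h => ?_, fun h => pos_reflectionPerm hreg hSL hi h hmi⟩
  refine P.reflectionPerm_self i m ▸ pos_reflectionPerm hreg hSL hi h fun e => hmi' ?_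
  rw [← P.reflectionPerm_self i m, e]

lemma wellFounded_height : WellFounded fun a b : ι => f (P.root a) < f (P.root b) :=
  Finite.wellFounded_of_trans_of_irrefl (InvImage (· < ·) fun a => f (P.root a))

lemma exists_isSimple_pos (g : V →ₗ[ℝ] ℝ) {k : ι} (hk : Pos P f k) (hg : 0 < g (P.root k)) :
    ∃ i, IsSimple P f i ∧ 0 < g (P.root i) := by
  induction k using (wellFounded_height (P := P) (f := f)).induction with
  | _ k ih =>
  by_cases hks : IsSimple P f k
  · exact ⟨k, hks, hg⟩
  obtain ⟨a, b, ha, hb, hab⟩ := not_not.mp fun h => hks ⟨hk, h⟩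
  have ha' : 0 < f (P.root a) := ha
  have hb' : 0 < f (P.root b) := hb
  have hf : f (P.root k) = f (P.root a) + f (P.root b) := by rw [hab, map_add]
  rw [hab, map_add] at hg
  rcases lt_or_ge 0 (g (P.root a)) with hga | hga
  · exact ih a (by linarith) ha hga
  · exact ih b (by linarith) hb (by linarith)

lemma tworho_reflectionPerm (i j : ι) :
    tworho P f (P.reflectionPerm i j) = tworho P f j - P.pairing i j * tworho P f i := by
  simp only [tworho, Finset.mul_sum, ← Finset.sum_sub_distrib]
  refine Finset.sum_congr rfl fun m _ => ?_
  split_ifs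
  · rw [pairing_reflectionPerm_right]
  · simp

/-- `s_i` permutes the positive roots other than `α_i` and negates `α_i`, so reindexing the sum
by `s_i` gives `tworho i = 4 - tworho i`. -/
lemma tworho_of_isSimple [P.IsCrystallographic] (hreg : Regular P f)
    (hSL : SimplyLaced P) {i : ι} (hi : IsSimple P f i) :
    tworho P f i = 2 := by
  classical
  set g : ι → ℝ := fun m => if 0 < f (P.root m) then P.pairing m i else 0
  have hfi : 0 < f (P.root i) := hi.1
  have hσi : ¬ 0 < f (P.root (P.reflectionPerm i i)) := by
    simp [RootPairing.root_reflectionPerm, hfi.le]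
  have hiσi : i ≠ P.reflectionPerm i i := fun h => hσi (h ▸ hfi)
  have key : ∀ m, g (P.reflectionPerm i m) + g m =
      (if m = i then 2 else 0) + (if m = P.reflectionPerm i i then 2 else 0) := by
    intro m
    by_cases hmi : m = i
    · subst hmi
      simp [g, hfi, hfi.le, hiσi]
    by_cases hmi' : m = P.reflectionPerm i i
    · subst hmi'
      simp [g, hfi, hfi.le, hiσi.symm]
    have hσ : P.pairing (P.reflectionPerm i m) i = - P.pairing m i := by
      rw [← RootPairing.pairing_reflectionPerm, RootPairing.pairing_reflectionPerm_self_right]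
    have hpos : 0 < f (P.root (P.reflectionPerm i m)) ↔ 0 < f (P.root m) :=
      pos_reflectionPerm_iff hreg hSL hi hmi hmi'
    simp only [g, hpos, hσ, hmi, hmi', if_false]
    split_ifs <;> ring
  have hsum : ∑ m, g (P.reflectionPerm i m) = ∑ m, g m := Equiv.sum_comp _ g
  have htwo : ∑ m, (g (P.reflectionPerm i m) + g m) = 4 := by
    simp only [key, Finset.sum_add_distrib, Finset.sum_ite_eq', Finset.mem_univ, if_true]
    norm_num
  rw [Finset.sum_add_distrib, hsum] at htwo
  change ∑ m, g m = 2
  linarith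

lemma Wrd.exchange [P.IsCrystallographic] (hreg : Regular P f)
    (hSL : SimplyLaced P) {w : V ≃ₗ[ℝ] V} {l : List ι}
    (hl : Wrd P f w l) {k : ι} (hk : Pos P f k) (hneg : f (w (P.root k)) < 0) :
    ∃ l', Wrd P f (w * refl P k) l' ∧ l'.length + 1 = l.length := by
  induction l generalizing w with
  | nil =>
    rw [← hl.2] at hneg
    exact absurd hk (not_lt.mpr (by simpa using hneg.le))
  | cons a t ih =>
    obtain ⟨hsimple, rfl⟩ := hl
    have ha : IsSimple P f a := hsimple a List.mem_cons_self
    have ht : Wrd P f _ t := ⟨fun b hb => hsimple b (List.mem_cons_of_mem a hb), rfl⟩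
    obtain ⟨m, hvk, hm⟩ := exists_root_eq_prod_apply (P := P) t k
    rcases (hreg m).lt_or_gt with hmneg | hmpos
    · obtain ⟨t', ht', hlen⟩ := ih ht (by rwa [hvk])
      refine ⟨a :: t', ⟨?_, ?_⟩, by simpa using hlen⟩
      · simpa [ha] using ht'.1
      · simp [ht'.2, mul_assoc]
    · -- `s_a` sends the positive root `α_m` (the image of `α_k` under `t`) to a negative one,
      -- which forces `m = a`
      have hma : m = a := by
        by_contra hma
        have := pos_reflectionPerm hreg hSL ha hmpos hma
        simp only [Pos, RootPairing.root_reflectionPerm] at this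
        simp only [List.map_cons, List.prod_cons, LinearEquiv.mul_apply, hvk] at hneg
        exact absurd this (not_lt.mpr hneg.le)
      subst hma
      refine ⟨t, ⟨ht.1, ?_⟩, by simp⟩
      simp [hm, mul_assoc, refl_mul_refl]

lemma len_mul_refl_of_neg [P.IsCrystallographic] (hreg : Regular P f)
    (hSL : SimplyLaced P) {w : V ≃ₗ[ℝ] V} (hw : InW P f w) {i : ι}
    (hi : IsSimple P f i) (hneg : f (w (P.root i)) < 0) :
    len P f (w * refl P i) + 1 = len P f w := by
  obtain ⟨l, hl, hlen⟩ := hw.exists_reduced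
  obtain ⟨l', hl', hlen'⟩ := hl.exchange hreg hSL hi.1 hneg
  have h₁ := len_le_length hl'
  have h₂ : len P f w ≤ len P f (w * refl P i) + 1 := by
    simpa [mul_assoc, refl_mul_refl] using len_mul_refl_le ⟨l', hl'⟩ hi
  omega

lemma len_mul_refl_of_pos [P.IsCrystallographic] (hreg : Regular P f)
    (hSL : SimplyLaced P) {w : V ≃ₗ[ℝ] V} (hw : InW P f w) {i : ι}
    (hi : IsSimple P f i) (hpos : 0 < f (w (P.root i))) :
    len P f (w * refl P i) = len P f w + 1 := by
  have := len_mul_refl_of_neg hreg hSL (hw.mul ⟨_, wrd_refl hi⟩) hi (by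
    simpa [refl, RootPairing.reflection_apply_self] using hpos)
  simp only [mul_assoc, refl_mul_refl, mul_one] at this
  omega

lemma len_refl_of_isSimple [P.IsCrystallographic] (hreg : Regular P f)
    (hSL : SimplyLaced P) {i : ι} (hi : IsSimple P f i) :
    len P f (refl P i) = 1 := by
  simpa [len_one] using len_mul_refl_of_pos hreg hSL inW_one hi hi.1

lemma len_refl_conj [P.IsCrystallographic] (hreg : Regular P f)
    (hSL : SimplyLaced P) {i k : ι} (hi : IsSimple P f i)
    (hk : Pos P f k) (hkW : InW P f (refl P k)) (hik : P.pairing i k = -1)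
    (hki : P.pairing k i = -1) :
    len P f (refl P i * refl P k * refl P i) = len P f (refl P k) + 2 := by
  have hiW : InW P f (refl P i) := ⟨_, wrd_refl hi⟩
  have hfi : 0 < f (P.root i) := hi.1
  have hfk : 0 < f (P.root k) := hk
  have h₁ : refl P k (P.root i) = P.root i + P.root k := by
    rw [refl, RootPairing.reflection_apply_root, hik]
    module
  have h₂ : (refl P i * refl P k) (P.root i) = P.root k := by
    rw [LinearEquiv.mul_apply, h₁, map_add, refl, RootPairing.reflection_apply_self,
      RootPairing.reflection_apply_root, hki]
    module
  have hlen₁ : len P f (refl P k * refl P i) = len P f (refl P k) + 1 :=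
    len_mul_refl_of_pos hreg hSL hkW hi (by rw [h₁, map_add]; linarith)
  have hlen₂ : len P f (refl P i * refl P k) = len P f (refl P k) + 1 := by
    rw [← hlen₁, ← len_inv (hkW.mul hiW), mul_inv_rev]
    rfl
  rw [len_mul_refl_of_pos hreg hSL (hiW.mul hkW) hi (by rwa [h₂]), hlen₂]

lemma len_braid [P.IsCrystallographic] (hreg : Regular P f)
    (hSL : SimplyLaced P) {i j : ι} (hi : IsSimple P f i)
    (hj : IsSimple P f j) (hij : P.pairing i j = -1) (hji : P.pairing j i = -1) :
    len P f (refl P i * refl P j * refl P i) = 3 := by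
  rw [len_refl_conj hreg hSL hi hj.1 ⟨_, wrd_refl hj⟩ hij hji, len_refl_of_isSimple hreg hSL hj]

lemma exists_conj_of_not_isSimple [P.IsCrystallographic] (hreg : Regular P f)
    (hSL : SimplyLaced P) {k : ι} (hk : Pos P f k)
    (hks : ¬ IsSimple P f k) :
    ∃ i k', IsSimple P f i ∧ Pos P f k' ∧ f (P.root k') < f (P.root k) ∧
      P.pairing i k' = -1 ∧ P.pairing k' i = -1 ∧
      refl P k = refl P i * refl P k' * refl P i := by
  obtain ⟨i, hi, hik⟩ := exists_isSimple_pos (P.coroot' k) hk (by simp)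
  rw [RootPairing.root_coroot'_eq_pairing] at hik
  have hki : k ≠ i := fun h => hks (h ▸ hi)
  have hik : P.pairing i k = 1 := (pairing_eq_one_or_two_of_pos hSL hik).resolve_right
    fun h => hki (eq_of_pairing_eq_two hSL h).symm
  have hik' : P.pairing i (P.reflectionPerm i k) = -1 := by
    rw [RootPairing.pairing_reflectionPerm, RootPairing.pairing_reflectionPerm_self_left, hik]
  refine ⟨i, P.reflectionPerm i k, hi, pos_reflectionPerm hreg hSL hi hk hki, ?_, hik',
    (hSL _ _).symm.trans hik', by simpa using refl_reflectionPerm (P := P) i (P.reflectionPerm i k)⟩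
  have hfi : 0 < f (P.root i) := hi.1
  rw [RootPairing.root_reflectionPerm, RootPairing.reflection_apply_root, map_sub, map_smul,
    smul_eq_mul, ← hSL, hik]
  linarith

lemma inW_refl [P.IsCrystallographic] (hreg : Regular P f)
    (hSL : SimplyLaced P) {k : ι} (hk : Pos P f k) :
    InW P f (refl P k) := by
  induction k using (wellFounded_height (P := P) (f := f)).induction with
  | _ k ih =>
  by_cases hks : IsSimple P f k
  · exact ⟨_, wrd_refl hks⟩
  obtain ⟨i, k', hi, hk', hlt, -, -, hconj⟩ := exists_conj_of_not_isSimple hreg hSL hk hks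
  have hiW : InW P f (refl P i) := ⟨_, wrd_refl hi⟩
  rw [hconj]
  exact (hiW.mul (ih k' hlt hk')).mul hiW

lemma contains_braid_of_not_isSimple [P.IsCrystallographic] (hreg : Regular P f)
    (hSL : SimplyLaced P) {k : ι} (hk : Pos P f k)
    (hks : ¬ IsSimple P f k) :
    ∃ i j, IsSimple P f i ∧ IsSimple P f j ∧ P.pairing i j = -1 ∧ P.pairing j i = -1 ∧
      Contains P f (refl P k) (refl P i * refl P j * refl P i) := by
  induction k using (wellFounded_height (P := P) (f := f)).induction with
  | _ k ih =>
  obtain ⟨i, k', hi, hk', hlt, hik', hk'i, hconj⟩ := exists_conj_of_not_isSimple hreg hSL hk hks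
  rw [hconj]
  by_cases hk's : IsSimple P f k'
  · exact ⟨i, k', hi, hk's, hik', hk'i, Contains.refl⟩
  obtain ⟨a, b, ha, hb, hab, hba, hcont⟩ := ih k' hlt hk' hk's
  have hiW : InW P f (refl P i) := ⟨_, wrd_refl hi⟩
  have hlen := len_refl_conj hreg hSL hi hk' (inW_refl hreg hSL hk') hik' hk'i
  refine ⟨a, b, ha, hb, hab, hba, Contains.trans ?_ hcont ⟨_, wrd_braid ha hb⟩⟩
  exact ⟨refl P i, refl P i, hiW, hiW, rfl, by rw [hlen, len_refl_of_isSimple hreg hSL hi]; ring⟩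

lemma pairing_eq_neg_one_of_len_braid [P.IsCrystallographic] (hreg : Regular P f)
    (hSL : SimplyLaced P) {i j : ι} (hi : IsSimple P f i)
    (hj : IsSimple P f j) (h : len P f (refl P i * refl P j * refl P i) = 3) :
    P.pairing i j = -1 := by
  have hij : i ≠ j := fun e => refl_ne_refl_of_len_braid hi h (e ▸ rfl)
  have hle := pairing_nonpos_of_isSimple hreg hSL hi hj hij
  rcases pairing_eq_of_simplyLaced hSL i j with h' | h' | h' | h' | h'
  · have hneg := (P.pairing_neg_two_neg_two_iff i j).mp ⟨h', (hSL j i).trans h'⟩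
    have hfi : 0 < f (P.root i) := hi.1
    have hfj : 0 < f (P.root j) := hj.1
    rw [hneg, map_neg] at hfi
    linarith
  · exact h'
  · have hcomm : refl P i * refl P j = refl P j * refl P i :=
      P.isOrthogonal_comm i j ⟨h', (hSL j i).trans h'⟩
    rw [hcomm, mul_assoc, refl_mul_refl, mul_one, len_refl_of_isSimple hreg hSL hj] at h
    norm_num at h
  all_goals linarith

lemma smallHeight_of_pairing_eq_neg_one [P.IsCrystallographic] (hreg : Regular P f)
    (hSL : SimplyLaced P) {i j : ι} (hi : IsSimple P f i)
    (hj : IsSimple P f j) (hij : P.pairing i j = -1) :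
    Pos P f (P.reflectionPerm i j) ∧ ¬ IsSimple P f (P.reflectionPerm i j) ∧
      (len P f (refl P (P.reflectionPerm i j)) : ℝ) = tworho P f (P.reflectionPerm i j) - 1 := by
  have hji : P.pairing j i = -1 := (hSL j i).trans hij
  have hroot : P.root (P.reflectionPerm i j) = P.root j + P.root i := by
    rw [RootPairing.root_reflectionPerm, RootPairing.reflection_apply_root, hji]
    module
  have hfi : 0 < f (P.root i) := hi.1
  have hfj : 0 < f (P.root j) := hj.1
  refine ⟨show 0 < f _ by rw [hroot, map_add]; linarith,
    fun hs => hs.2 ⟨j, i, hj.1, hi.1, hroot⟩, ?_⟩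
  rw [refl_reflectionPerm, len_braid hreg hSL hi hj hij hji, tworho_reflectionPerm,
    tworho_of_isSimple hreg hSL hi, tworho_of_isSimple hreg hSL hj, hij]
  norm_num

end

theorem smallHeightAvoiding_iff_shortBraidAvoiding (hP : P.IsCrystallographic) (hreg : Regular P f)
    (hSL : ∀ i j : ι, P.pairing i j = P.pairing j i)
    (w : V ≃ₗ[ℝ] V) :
    SmallHeightAvoiding P f w ↔
      ∀ l : List ι, Wrd P f w l → l.length = len P f w →
        ¬ ∃ (l₁ l₂ : List ι) (i j : ι), refl P i ≠ refl P j ∧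
          l = l₁ ++ [i, j, i] ++ l₂ := by
  constructor
  · rintro hsha l hl hlen ⟨l₁, l₂, i, j, -, rfl⟩
    have hi : IsSimple P f i := hl.1 i (by simp)
    have hj : IsSimple P f j := hl.1 j (by simp)
    obtain ⟨hcont, hlen₃⟩ := contains_of_reduced_infix hl hlen
    simp only [List.map_cons, List.map_nil, List.prod_cons, List.prod_nil, mul_one,
      List.length_cons, List.length_nil, ← mul_assoc] at hcont hlen₃
    have hij := pairing_eq_neg_one_of_len_braid hreg hSL hi hj hlen₃
    obtain ⟨hpos, hns, hheight⟩ := smallHeight_of_pairing_eq_neg_one hreg hSL hi hj hij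
    exact hsha ⟨_, hpos, hns, hheight, by rwa [refl_reflectionPerm]⟩
  · rintro hbraid ⟨k, hk, hks, -, hcont⟩
    obtain ⟨i, j, hi, hj, hij, hji, hcont'⟩ := contains_braid_of_not_isSimple hreg hSL hk hks
    have hlen₃ := len_braid hreg hSL hi hj hij hji
    obtain ⟨l₁, l₂, hl, hlen⟩ := (hcont.trans hcont' ⟨_, wrd_braid hi hj⟩).exists_reduced_infix
      (wrd_braid hi hj) (by rw [hlen₃]; rfl)
    exact hbraid _ hl hlen ⟨l₁, l₂, i, j, refl_ne_refl_of_len_braid hi hlen₃, rfl⟩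

end QBG
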